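/- arXiv:math/0311273 — 2 statements merged into one kernel-verified Lean document; each statement's English description precedes it below -/
import Mathlib

section
/- Let σ be a tetrahedron in ℝ³ that is f-fat. Then all dihedral angles of σ are bounded below by a constant depending only on f; equivalently, fatness of a 3-simplex implies a uniform lower bound on its six dihedral angles. -/
open Metric
open scoped RealInnerProductSpace

noncomputable section

abbrev E3 := EuclideanSpace ℝ (Fin 3)

/-- The inradius of a set. -/
def inradius (s : Set E3) : ℝ :=
  sSup {r : ℝ | 0 ≤ r ∧ ∃ c ∈ affineSpan ℝ s, closedBall c r ∩ (affineSpan ℝ s : Set E3) ⊆ s}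

/-- The circumradius of a set. -/
def circumradius (s : Set E3) : ℝ :=
  sInf {r : ℝ | 0 ≤ r ∧ ∃ c, s ⊆ closedBall c r}

/-- `f`-fatness: inradius/circumradius at least `f`. -/
def Fat (f : ℝ) (s : Set E3) : Prop := f ≤ inradius s / circumradius s

/-- The component of `u` orthogonal to `e`. -/
def perpComp (e u : E3) : E3 := u - (⟪u, e⟫ / ⟪e, e⟫) • e

/-- The dihedral angle of a tetrahedron along the edge `a b`, between the faces `a b c` and
`a b d`: the angle between the components of `c - a` and `d - a` orthogonal to the edge. -/
def dihedralAngle (a b c d : E3) : ℝ :=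
  InnerProductGeometry.angle (perpComp (b - a) (c - a)) (perpComp (b - a) (d - a))

/-- Points of the convex hull of `{0, u, v}` are nonnegative combinations. -/
lemma conv_rep {u v : E3} (x : E3) (hx : x ∈ convexHull ℝ ({0, u, v} : Set E3)) :
    ∃ β γ : ℝ, 0 ≤ β ∧ 0 ≤ γ ∧ β + γ ≤ 1 ∧ x = β • u + γ • v := by
  have hconv : Convex ℝ {x : E3 | ∃ β γ : ℝ, 0 ≤ β ∧ 0 ≤ γ ∧ β + γ ≤ 1 ∧ x = β • u + γ • v} := by
    rintro x ⟨b1, g1, hb1, hg1, hs1, rfl⟩ y ⟨b2, g2, hb2, hg2, hs2, rfl⟩ q1 q2 hq1 hq2 hq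
    refine ⟨q1*b1+q2*b2, q1*g1+q2*g2, by positivity, by positivity, by nlinarith, ?_⟩
    simp only [smul_add, add_smul, smul_smul]; abel
  refine convexHull_min ?_ hconv hx
  rintro y hy
  rcases hy with rfl | rfl | rfl
  · exact ⟨0, 0, le_refl _, le_refl _, by norm_num, by simp⟩
  · exact ⟨1, 0, by norm_num, le_refl _, by norm_num, by simp⟩
  · exact ⟨0, 1, le_refl _, by norm_num, by norm_num, by simp⟩

lemma span_pair_ne_top (x y : E3) : Submodule.span ℝ ({x, y} : Set E3) ≠ ⊤ := by
  classical
  intro h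
  have h1 : Module.finrank ℝ ↥(Submodule.span ℝ (↑({x, y} : Finset E3) : Set E3)) ≤ 2 := by
    refine le_trans (finrank_span_finset_le_card _) ?_
    exact le_trans (Finset.card_insert_le _ _) (by simp)
  have h4 : (↑({x, y} : Finset E3) : Set E3) = ({x, y} : Set E3) := by simp
  rw [h4, h] at h1
  have h3 : Module.finrank ℝ E3 = 3 := finrank_euclideanSpace_fin
  rw [finrank_top] at h1
  omega

/-- An `f`-fat tetrahedron in `ℝ³` has all six dihedral angles bounded below by a constant
`θ(f) > 0` depending only on `f`. -/
theorem fat_tetrahedron_dihedral_angles (f : ℝ) (hf : 0 < f) :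
    ∃ θ > 0, ∀ p : Fin 4 → E3, AffineIndependent ℝ p →
      Fat f (convexHull ℝ (Set.range p)) →
      ∀ i j k l : Fin 4, i ≠ j → i ≠ k → i ≠ l → j ≠ k → j ≠ l → k ≠ l →
        θ ≤ dihedralAngle (p i) (p j) (p k) (p l) := by
  refine ⟨f / 4, by positivity, ?_⟩
  intro p hp hfat i j k l hij hik hil hjk hjl hkl
  set s : Set E3 := convexHull ℝ (Set.range p) with hs
  -- the affine span is everything
  have htop : affineSpan ℝ (Set.range p) = ⊤ :=
    hp.affineSpan_eq_top_iff_card_eq_finrank_add_one.mpr (by simp [finrank_euclideanSpace_fin])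
  have htops : affineSpan ℝ s = ⊤ := by rw [hs, affineSpan_convexHull, htop]
  have hpmem : ∀ t : Fin 4, p t ∈ s := fun t => subset_convexHull ℝ _ ⟨t, rfl⟩
  -- circumradius : nonneg, and diameter bound
  set R := circumradius s with hR
  set T : Set ℝ := {ρ : ℝ | 0 ≤ ρ ∧ ∃ c, s ⊆ closedBall c ρ} with hT
  have hRdef : R = sInf T := rfl
  have hTne : T.Nonempty := by
    refine ⟨∑ t : Fin 4, dist (p t) (p i), Finset.sum_nonneg (fun _ _ => dist_nonneg), p i, ?_⟩
    refine convexHull_min ?_ (convex_closedBall _ _)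
    rintro x ⟨t, rfl⟩
    rw [mem_closedBall]
    exact Finset.single_le_sum (f := fun t => dist (p t) (p i))
      (fun _ _ => dist_nonneg) (Finset.mem_univ t)
  have hR0 : 0 ≤ R := by rw [hRdef]; exact Real.sInf_nonneg (fun x hx => hx.1)
  have hfat' : f ≤ inradius s / R := hfat
  have hRpos : 0 < R := by
    rcases eq_or_lt_of_le hR0 with h0 | h; · rw [← h0] at hfat'; simp at hfat'; linarith
    exact h
  have hdiam : ∀ x ∈ s, ∀ y ∈ s, dist x y ≤ 2 * R := by
    intro x hx y hy
    refine le_of_forall_pos_le_add ?_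
    intro ε hε
    obtain ⟨ρ, ⟨hρ0, c, hc⟩, hρlt⟩ :=
      exists_lt_of_csInf_lt hTne (show sInf T < R + ε / 2 by rw [← hRdef]; linarith)
    have h1 : dist x c ≤ ρ := mem_closedBall.mp (hc hx)
    have h2 : dist y c ≤ ρ := mem_closedBall.mp (hc hy)
    calc dist x y ≤ dist x c + dist c y := dist_triangle _ _ _
      _ = dist x c + dist y c := by rw [dist_comm c y]
      _ ≤ 2 * ρ := by linarith
      _ ≤ 2 * R + ε := by linarith
  -- inradius : an inscribed ball of radius f*R/2
  set r := inradius s with hr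
  have hrfR : f * R ≤ r := (le_div_iff₀ hRpos).mp hfat'
  have hrpos : 0 < r := lt_of_lt_of_le (by positivity) hrfR
  set S : Set ℝ := {ρ : ℝ | 0 ≤ ρ ∧ ∃ c ∈ affineSpan ℝ s,
      closedBall c ρ ∩ (affineSpan ℝ s : Set E3) ⊆ s} with hS
  have hrdef : r = sSup S := rfl
  have hSne : S.Nonempty := by
    refine ⟨0, le_refl _, p i, ?_, ?_⟩
    · rw [htops]; exact AffineSubspace.mem_top _ _ _
    · rw [closedBall_zero]
      rintro x ⟨hx1, -⟩
      rw [Set.mem_singleton_iff] at hx1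
      rw [hx1]; exact hpmem i
  obtain ⟨ρ, ⟨hρ0, z, hzmem, hzball⟩, hρgt⟩ :=
    exists_lt_of_lt_csSup hSne (show r / 2 < sSup S by rw [← hrdef]; linarith)
  rw [htops] at hzball
  simp only [AffineSubspace.top_coe, Set.inter_univ] at hzball
  set ρ₀ : ℝ := f * R / 2 with hρ₀
  have hρ₀pos : 0 < ρ₀ := by positivity
  have hball : closedBall z ρ₀ ⊆ s :=
    Set.Subset.trans (closedBall_subset_closedBall (by linarith)) hzball
  -- geometry setup
  set e : E3 := p j - p i with he_def
  set u : E3 := perpComp e (p k - p i) with hu_def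
  set v : E3 := perpComp e (p l - p i) with hv_def
  set m : E3 := perpComp u v with hm_def
  have henz : e ≠ 0 := sub_ne_zero.mpr (fun h => hij (hp.injective h).symm)
  have hee : ⟪e, e⟫ ≠ 0 := fun h => henz (inner_self_eq_zero.mp h)
  -- span of the three edge vectors is everything
  have huniv : ∀ t : Fin 4, t = i ∨ t = j ∨ t = k ∨ t = l := by
    intro t
    by_contra hcon
    push_neg at hcon
    obtain ⟨h1, h2, h3, h4⟩ := hcon
    have e1 : t.val ≠ i.val := fun h => h1 (Fin.ext h)
    have e2 : t.val ≠ j.val := fun h => h2 (Fin.ext h)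
    have e3 : t.val ≠ k.val := fun h => h3 (Fin.ext h)
    have e4 : t.val ≠ l.val := fun h => h4 (Fin.ext h)
    have f1 : i.val ≠ j.val := fun h => hij (Fin.ext h)
    have f2 : i.val ≠ k.val := fun h => hik (Fin.ext h)
    have f3 : i.val ≠ l.val := fun h => hil (Fin.ext h)
    have f4 : j.val ≠ k.val := fun h => hjk (Fin.ext h)
    have f5 : j.val ≠ l.val := fun h => hjl (Fin.ext h)
    have f6 : k.val ≠ l.val := fun h => hkl (Fin.ext h)
    have := t.isLt; have := i.isLt; have := j.isLt; have := k.isLt; have := l.isLt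
    omega
  have hspan : Submodule.span ℝ ({e, p k - p i, p l - p i} : Set E3) = ⊤ := by
    rw [eq_top_iff]
    have h1 : vectorSpan ℝ (Set.range p) = ⊤ := by
      rw [← direction_affineSpan, htop, AffineSubspace.direction_top]
    rw [← h1, vectorSpan_def]
    refine Submodule.span_le.mpr ?_
    rintro x ⟨x1, ⟨t1, rfl⟩, x2, ⟨t2, rfl⟩, rfl⟩
    have key : ∀ t : Fin 4, p t - p i ∈
        Submodule.span ℝ ({e, p k - p i, p l - p i} : Set E3) := by
      intro t
      rcases huniv t with rfl | rfl | rfl | rfl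
      · simp
      · exact Submodule.subset_span (by rw [← he_def]; simp)
      · exact Submodule.subset_span (by simp)
      · exact Submodule.subset_span (by simp)
    have h2 : (p t1 - p i) - (p t2 - p i) ∈
        Submodule.span ℝ ({e, p k - p i, p l - p i} : Set E3) :=
      Submodule.sub_mem _ (key t1) (key t2)
    have h3 : p t1 -ᵥ p t2 = (p t1 - p i) - (p t2 - p i) := by
      simp only [vsub_eq_sub]; abel
    simpa [h3] using h2
  -- nondegeneracy
  have hu : u ≠ 0 := by
    intro h0
    have h1 : perpComp e (p k - p i) = 0 := by rw [← hu_def]; exact h0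
    rw [perpComp] at h1
    have hck : p k - p i = (⟪p k - p i, e⟫ / ⟪e, e⟫) • e := sub_eq_zero.mp h1
    apply span_pair_ne_top e (p l - p i)
    rw [eq_top_iff, ← hspan, Submodule.span_le]
    rintro x hx
    simp only [Set.mem_insert_iff, Set.mem_singleton_iff] at hx
    rcases hx with rfl | rfl | rfl
    · exact Submodule.subset_span (by simp)
    · rw [hck]; exact Submodule.smul_mem _ _ (Submodule.subset_span (by simp))
    · exact Submodule.subset_span (by simp)
  have huu : ⟪u, u⟫ ≠ 0 := fun h => hu (inner_self_eq_zero.mp h)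
  have hm : m ≠ 0 := by
    intro h0
    have h2 : perpComp u v = 0 := by rw [← hm_def]; exact h0
    rw [perpComp] at h2
    have h1 : v = (⟪v, u⟫ / ⟪u, u⟫) • u := sub_eq_zero.mp h2
    apply span_pair_ne_top e (p k - p i)
    rw [eq_top_iff, ← hspan, Submodule.span_le]
    rintro x hx
    simp only [Set.mem_insert_iff, Set.mem_singleton_iff] at hx
    rcases hx with rfl | rfl | rfl
    · exact Submodule.subset_span (by simp)
    · exact Submodule.subset_span (by simp)
    · have h3 : p l - p i = v + (⟪p l - p i, e⟫ / ⟪e, e⟫) • e := by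
        rw [hv_def, perpComp]; abel
      rw [h3, h1, hu_def, perpComp]
      refine Submodule.add_mem _ ?_ (Submodule.smul_mem _ _ (Submodule.subset_span (by simp)))
      exact Submodule.smul_mem _ _ (Submodule.sub_mem _
        (Submodule.subset_span (by simp))
        (Submodule.smul_mem _ _ (Submodule.subset_span (by simp))))
  have hmnorm : ‖m‖ ≠ 0 := fun h => hm (norm_eq_zero.mp h)
  have hmpos : 0 < ‖m‖ := lt_of_le_of_ne (norm_nonneg m) (Ne.symm hmnorm)
  -- inner product identities
  have hue : ⟪u, e⟫ = 0 := by
    rw [hu_def, perpComp, inner_sub_left, real_inner_smul_left, div_mul_cancel₀ _ hee, sub_self]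
  have hve : ⟪v, e⟫ = 0 := by
    rw [hv_def, perpComp, inner_sub_left, real_inner_smul_left, div_mul_cancel₀ _ hee, sub_self]
  have hme : ⟪m, e⟫ = 0 := by
    rw [hm_def, perpComp, inner_sub_left, real_inner_smul_left, hue, hve]
    ring
  have hum : ⟪u, m⟫ = 0 := by
    rw [hm_def, perpComp, inner_sub_right, real_inner_smul_right, real_inner_comm v u,
      div_mul_cancel₀ _ huu, sub_self]
  have hvm : ⟪v, m⟫ = ⟪m, m⟫ := by
    have h1 : v = m + (⟪v, u⟫ / ⟪u, u⟫) • u := by rw [hm_def, perpComp]; abel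
    calc ⟪v, m⟫ = ⟪m + (⟪v, u⟫ / ⟪u, u⟫) • u, m⟫ := by rw [← h1]
      _ = ⟪m, m⟫ := by rw [inner_add_left, real_inner_smul_left, hum]; ring
  -- the sine of the dihedral angle
  set θ : ℝ := InnerProductGeometry.angle u v with hθ_def
  have hkey : Real.sqrt (⟪u, u⟫ * ⟪v, v⟫ - ⟪u, v⟫ * ⟪u, v⟫) = ‖m‖ * ‖u‖ := by
    have hvm' : ⟪v, m⟫ = ⟪v, v⟫ - ⟪u, v⟫ * ⟪u, v⟫ / ⟪u, u⟫ := by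
      rw [hm_def, perpComp, inner_sub_right, real_inner_smul_right, real_inner_comm v u]
      ring
    have hmm2 : ⟪m, m⟫ * ⟪u, u⟫ = ⟪u, u⟫ * ⟪v, v⟫ - ⟪u, v⟫ * ⟪u, v⟫ := by
      rw [← hvm, hvm', sub_mul, div_mul_cancel₀ _ huu]
      ring
    have h1 : ⟪u, u⟫ * ⟪v, v⟫ - ⟪u, v⟫ * ⟪u, v⟫ = (‖m‖ * ‖u‖) ^ 2 := by
      rw [← hmm2, real_inner_self_eq_norm_sq, real_inner_self_eq_norm_sq]
      ring
    rw [h1, Real.sqrt_sq (by positivity)]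
  have hsineq : Real.sin θ * ‖v‖ = ‖m‖ := by
    have h := InnerProductGeometry.sin_angle_mul_norm_mul_norm u v
    rw [hkey] at h
    have hu0 : ‖u‖ ≠ 0 := fun hh => hu (norm_eq_zero.mp hh)
    apply mul_right_cancel₀ hu0
    calc Real.sin θ * ‖v‖ * ‖u‖ = Real.sin θ * (‖u‖ * ‖v‖) := by ring
      _ = ‖m‖ * ‖u‖ := h
  -- the projection as an affine map
  obtain ⟨L, hL⟩ : ∃ L : E3 →ₗ[ℝ] E3, ∀ x, L x = perpComp e x := by
    refine ⟨{ toFun := perpComp e, map_add' := ?_, map_smul' := ?_ }, fun _ => rfl⟩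
    · intro x y
      simp only [perpComp, inner_add_left, add_div, add_smul]
      abel
    · intro c x
      simp only [perpComp, real_inner_smul_left, RingHom.id_apply, smul_sub, mul_div_assoc,
        mul_smul]
  set A : E3 →ᵃ[ℝ] E3 := L.toAffineMap.comp ((AffineEquiv.vaddConst ℝ (p i)).symm.toAffineMap)
    with hA
  have hAx : ∀ x, A x = perpComp e (x - p i) := by
    intro x
    rw [hA]
    rw [AffineMap.comp_apply]
    rw [LinearMap.coe_toAffineMap, AffineEquiv.coe_toAffineMap, AffineEquiv.vaddConst_symm_apply,
      vsub_eq_sub, hL]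
  have hAconv : A '' s ⊆ convexHull ℝ ({0, u, v} : Set E3) := by
    rw [hs, AffineMap.image_convexHull]
    refine convexHull_min ?_ (convex_convexHull ℝ _)
    rintro x ⟨y, ⟨t, rfl⟩, rfl⟩
    apply subset_convexHull
    rcases huniv t with rfl | rfl | rfl | rfl
    · rw [hAx]
      simp [perpComp]
    · rw [hAx, ← he_def]
      rw [show perpComp e e = 0 by rw [perpComp, div_self hee, one_smul, sub_self]]
      simp
    · rw [hAx, ← hu_def]
      simp
    · rw [hAx, ← hv_def]
      simp
  -- project the inscribed ball
  have hzs : z ∈ s := hball (mem_closedBall_self hρ₀pos.le)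
  set zp : E3 := perpComp e (z - p i) with hzp_def
  have hzpc : zp ∈ convexHull ℝ ({0, u, v} : Set E3) := by
    refine hAconv ⟨z, hzs, ?_⟩
    rw [hAx]
  obtain ⟨β₁, γ₁, hβ₁, hγ₁, hsum₁, hzpeq⟩ := conv_rep zp hzpc
  set x0 : E3 := z - (ρ₀ / ‖m‖) • m with hx0
  have hx0s : x0 ∈ s := by
    apply hball
    rw [mem_closedBall, dist_eq_norm]
    have h1 : x0 - z = -((ρ₀ / ‖m‖) • m) := by rw [hx0]; abel
    rw [h1, norm_neg, norm_smul, Real.norm_eq_abs, abs_of_nonneg (by positivity),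
      div_mul_cancel₀ _ hmnorm]
  have hwz : perpComp e (x0 - p i) = zp - (ρ₀ / ‖m‖) • m := by
    have h1 : x0 - p i = (z - p i) - (ρ₀ / ‖m‖) • m := by rw [hx0]; abel
    have h2 : perpComp e m = m := by rw [perpComp, hme]; simp
    rw [← hL, h1, map_sub, map_smul, hL, hL, h2, ← hzp_def]
  have hw : zp - (ρ₀ / ‖m‖) • m ∈ convexHull ℝ ({0, u, v} : Set E3) := by
    rw [← hwz]
    refine hAconv ⟨x0, hx0s, ?_⟩
    rw [hAx]
  obtain ⟨β₂, γ₂, hβ₂, hγ₂, hsum₂, hweq⟩ := conv_rep _ hw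
  have hmm_norm : ⟪m, m⟫ = ‖m‖ ^ 2 := real_inner_self_eq_norm_sq m
  have hwm : ⟪zp - (ρ₀ / ‖m‖) • m, m⟫ = γ₂ * ⟪m, m⟫ := by
    rw [hweq, inner_add_left, real_inner_smul_left, real_inner_smul_left, hum, hvm]
    ring
  have hzpm : ⟪zp, m⟫ = γ₁ * ⟪m, m⟫ := by
    rw [hzpeq, inner_add_left, real_inner_smul_left, real_inner_smul_left, hum, hvm]
    ring
  have hineq : ρ₀ ≤ ‖m‖ := by
    have e1 : ⟪zp - (ρ₀ / ‖m‖) • m, m⟫ = γ₁ * ‖m‖ ^ 2 - ρ₀ * ‖m‖ := by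
      rw [inner_sub_left, real_inner_smul_left, hzpm, hmm_norm]
      have h9 : ρ₀ / ‖m‖ * ‖m‖ ^ 2 = ρ₀ * ‖m‖ := by
        rw [pow_two, ← mul_assoc, div_mul_cancel₀ _ hmnorm]
      rw [h9]
    have e2 : 0 ≤ γ₁ * ‖m‖ ^ 2 - ρ₀ * ‖m‖ := by
      rw [← e1, hwm, hmm_norm]
      positivity
    have hγ₁le : γ₁ ≤ 1 := by linarith
    have h6 : γ₁ * ‖m‖ ^ 2 ≤ ‖m‖ ^ 2 := by
      calc γ₁ * ‖m‖ ^ 2 ≤ 1 * ‖m‖ ^ 2 := mul_le_mul_of_nonneg_right hγ₁le (sq_nonneg _)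
        _ = ‖m‖ ^ 2 := one_mul _
    have h7 : ρ₀ * ‖m‖ ≤ ‖m‖ * ‖m‖ := by
      rw [← pow_two]
      linarith
    exact le_of_mul_le_mul_right h7 hmpos
  -- norm of v is at most the diameter
  have hvnorm : ‖v‖ ≤ 2 * R := by
    have h1 : ‖v‖ ^ 2 ≤ ‖p l - p i‖ ^ 2 := by
      have heepos : 0 < ⟪e, e⟫ := lt_of_le_of_ne real_inner_self_nonneg (Ne.symm hee)
      have hev : ⟪e, v⟫ = 0 := by rw [real_inner_comm]; exact hve
      have hwv : (p l - p i) - v = (⟪p l - p i, e⟫ / ⟪e, e⟫) • e := by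
        rw [hv_def, perpComp]
        abel
      have hv1 : ⟪p l - p i, v⟫ - ⟪v, v⟫ = 0 := by
        rw [← inner_sub_left, hwv, real_inner_smul_left, hev]
        ring
      have hv2 : ⟪p l - p i, v⟫ =
          ⟪p l - p i, p l - p i⟫ - ⟪p l - p i, e⟫ * ⟪p l - p i, e⟫ / ⟪e, e⟫ := by
        rw [hv_def, perpComp, inner_sub_right, real_inner_smul_right]
        ring
      have h2 : ⟪v, v⟫ = ⟪p l - p i, p l - p i⟫ -
          ⟪p l - p i, e⟫ * ⟪p l - p i, e⟫ / ⟪e, e⟫ := by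
        rw [← hv2]
        linarith
      have h3 : 0 ≤ ⟪p l - p i, e⟫ * ⟪p l - p i, e⟫ / ⟪e, e⟫ :=
        div_nonneg (mul_self_nonneg _) heepos.le
      rw [← real_inner_self_eq_norm_sq, ← real_inner_self_eq_norm_sq, h2]
      linarith
    have h4 : ‖p l - p i‖ = dist (p l) (p i) := (dist_eq_norm _ _).symm
    have h5 : dist (p l) (p i) ≤ 2 * R := hdiam _ (hpmem l) _ (hpmem i)
    have h6 : ‖v‖ ≤ ‖p l - p i‖ :=
      (pow_le_pow_iff_left₀ (norm_nonneg _) (norm_nonneg _) two_ne_zero).mp h1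
    linarith
  -- conclude
  have hsinnn : 0 ≤ Real.sin θ :=
    Real.sin_nonneg_of_nonneg_of_le_pi (InnerProductGeometry.angle_nonneg u v)
      (InnerProductGeometry.angle_le_pi u v)
  have hsin4 : f / 4 ≤ Real.sin θ := by
    have h1 : ρ₀ ≤ Real.sin θ * (2 * R) := by
      calc ρ₀ ≤ ‖m‖ := hineq
        _ = Real.sin θ * ‖v‖ := hsineq.symm
        _ ≤ Real.sin θ * (2 * R) := mul_le_mul_of_nonneg_left hvnorm hsinnn
    rw [hρ₀] at h1
    have h2 : f / 4 * (2 * R) ≤ Real.sin θ * (2 * R) := by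
      calc f / 4 * (2 * R) = f * R / 2 := by ring
        _ ≤ _ := h1
    exact le_of_mul_le_mul_right h2 (by linarith)
  show f / 4 ≤ θ
  rcases eq_or_lt_of_le (InnerProductGeometry.angle_nonneg u v) with h0 | hposθ
  · exfalso
    rw [hθ_def, ← h0, Real.sin_zero] at hsin4
    linarith
  · calc f / 4 ≤ Real.sin θ := hsin4
      _ ≤ θ := le_of_lt (Real.sin_lt hposθ)
end
end

section
/- Let u₁u₂u₃u₄ be an f-fat tetrahedron in ℝ³ and let O be a point of a face f₁₂₃ such that the segment from an opposite vertex u to O is the height of a sub-tetrahedron built over a small triangle in f₁₂₃ with side lengths comparable (up to a constant c₁) to those of f₁₂₃. Then the ratio (height from u to the base)/(base side length) of the sub-tetrahedron is bounded below by a constant c⁰ depending only on f and c₁; i.e., uO/ν'ν'' > c·(uO/ν_lν_m) > c⁰ for constants depending only on f. -/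
open Metric
open scoped RealInnerProductSpace

noncomputable section

/-- Let `u₁u₂u₃u₄ = p 0 p 1 p 2 p 3` be an `f`-fat tetrahedron, `u = p 3`, and let `O` be the
foot of the perpendicular from `u` to the face `f₁₂₃ = p 0 p 1 p 2`.  If `ν', ν''` are points of
the face with `|ν' ν''| ≥ c₁·|ν_l ν_m|` for some edge `ν_l ν_m` of the face, then the
height-to-base ratio `|u O| / |ν' ν''|` is bounded below by a constant `c⁰ > 0` depending only
on `f` and `c₁`. -/
theorem fat_tetrahedron_height_base_ratio (f c₁ : ℝ) (hf : 0 < f) (hc : 0 < c₁) :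
    ∃ c₀ > 0, ∀ p : Fin 4 → E3, AffineIndependent ℝ p →
      Fat f (convexHull ℝ (Set.range p)) →
      ∀ O ν' ν'' : E3,
        O ∈ affineSpan ℝ ({p 0, p 1, p 2} : Set E3) →
        (∀ x ∈ (affineSpan ℝ ({p 0, p 1, p 2} : Set E3) : Set E3), ⟪p 3 - O, x - O⟫ = 0) →
        ν' ∈ convexHull ℝ ({p 0, p 1, p 2} : Set E3) →
        ν'' ∈ convexHull ℝ ({p 0, p 1, p 2} : Set E3) → ν' ≠ ν'' →
        (∃ i j : Fin 4, i ≠ j ∧ i ≠ 3 ∧ j ≠ 3 ∧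
          c₁ * dist (p i) (p j) ≤ dist ν' ν'') →
        c₀ < dist (p 3) O / dist ν' ν'' := by
  refine ⟨f / 2, by positivity, ?_⟩
  intro p hp hfat O ν' ν'' hO hperp hν' hν'' hne _
  set s : Set E3 := convexHull ℝ (Set.range p) with hs
  set n : E3 := p 3 - O with hn
  set d : ℝ := dist ν' ν'' with hd
  have hd0 : 0 < d := dist_pos.mpr hne
  -- the affine span of the tetrahedron is everything
  have htop : affineSpan ℝ (Set.range p) = ⊤ := by
    refine hp.affineSpan_eq_top_iff_card_eq_finrank_add_one.mpr ?_
    simp [finrank_euclideanSpace]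
  have hspan_s : affineSpan ℝ s = ⊤ := by
    rw [hs, affineSpan_convexHull, htop]
  -- the face is inside the tetrahedron
  have hface : ({p 0, p 1, p 2} : Set E3) ⊆ Set.range p := by
    intro x hx
    rcases hx with rfl | rfl | rfl <;> exact ⟨_, rfl⟩
  have hfacehull : convexHull ℝ ({p 0, p 1, p 2} : Set E3) ⊆ s :=
    convexHull_mono hface
  -- p 3 is not in the plane of the face
  have hp3 : p 3 ∉ affineSpan ℝ ({p 0, p 1, p 2} : Set E3) := by
    intro hmem
    have h1 : ({p 0, p 1, p 2} : Set E3) ⊆ p '' (Set.univ \ {3}) := by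
      intro x hx
      rcases hx with rfl | rfl | rfl
      · exact ⟨0, by simp, rfl⟩
      · exact ⟨1, by simp, rfl⟩
      · exact ⟨2, by simp, rfl⟩
    exact hp.notMem_affineSpan_diff 3 Set.univ
      (affineSpan_mono ℝ h1 hmem)
  have hn0 : n ≠ 0 := by
    intro h
    apply hp3
    have : p 3 = O := by
      have := sub_eq_zero.mp h
      exact this
    rw [this]; exact hO
  have hnorm : 0 < ‖n‖ := norm_pos_iff.mpr hn0
  -- the tetrahedron lies in the slab 0 ≤ ⟪n, x - O⟫ ≤ ‖n‖^2
  have hslab : ∀ x ∈ s, ⟪n, x - O⟫ ∈ Set.Icc (0 : ℝ) (‖n‖ ^ 2) := by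
    have hconv : Convex ℝ {x : E3 | ⟪n, x - O⟫ ∈ Set.Icc (0 : ℝ) (‖n‖ ^ 2)} := by
      have : {x : E3 | ⟪n, x - O⟫ ∈ Set.Icc (0 : ℝ) (‖n‖ ^ 2)} =
          {x : E3 | ⟪n, O⟫ ≤ ⟪n, x⟫} ∩ {x : E3 | ⟪n, x⟫ ≤ ⟪n, O⟫ + ‖n‖ ^ 2} := by
        ext x
        simp only [Set.mem_setOf_eq, Set.mem_inter_iff, Set.mem_Icc, inner_sub_right]
        constructor
        · rintro ⟨h1, h2⟩; constructor <;> linarith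
        · rintro ⟨h1, h2⟩; constructor <;> linarith
      rw [this]
      have hlin : IsLinearMap ℝ (fun x : E3 => ⟪n, x⟫) :=
        ⟨fun x y => inner_add_right n x y, fun c x => real_inner_smul_right n x c⟩
      exact (convex_halfSpace_ge hlin _).inter (convex_halfSpace_le hlin _)
    intro x hx
    refine convexHull_min ?_ hconv hx
    rintro y ⟨i, rfl⟩
    have hperp' : ∀ k : Fin 4, k ≠ 3 → (⟪n, p k - O⟫ = 0) := by
      intro k hk
      refine hperp _ (subset_affineSpan ℝ _ ?_)
      fin_cases k
      · exact Set.mem_insert _ _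
      · exact Set.mem_insert_of_mem _ (Set.mem_insert _ _)
      · exact Set.mem_insert_of_mem _ (Set.mem_insert_of_mem _ rfl)
      · simp at hk
    by_cases hi : i = 3
    · subst hi
      simp only [Set.mem_setOf_eq]
      rw [← hn, real_inner_self_eq_norm_sq]
      exact ⟨by positivity, le_refl _⟩
    · have := hperp' i hi
      simp only [Set.mem_setOf_eq, this]
      exact ⟨le_refl _, by positivity⟩
  -- every inball radius is at most ‖n‖/2
  have hA : ∀ ρ ∈ {r : ℝ | 0 ≤ r ∧ ∃ c ∈ affineSpan ℝ s,
      closedBall c r ∩ (affineSpan ℝ s : Set E3) ⊆ s}, ρ ≤ ‖n‖ / 2 := by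
    rintro ρ ⟨hρ0, c, -, hsub⟩
    have hsub' : closedBall c ρ ⊆ s := by
      intro x hx
      exact hsub ⟨hx, by rw [hspan_s]; trivial⟩
    set v : E3 := (ρ / ‖n‖) • n with hv
    have hvnorm : ‖v‖ = ρ := by
      rw [hv, norm_smul, Real.norm_eq_abs, abs_div, abs_of_nonneg hρ0, abs_of_nonneg hnorm.le,
        div_mul_cancel₀]
      exact hnorm.ne'
    have hplus : c + v ∈ s := hsub' (by
      simp only [mem_closedBall, dist_eq_norm]
      simp [hvnorm])
    have hminus : c - v ∈ s := hsub' (by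
      simp only [mem_closedBall, dist_eq_norm]
      simp [hvnorm])
    have h1 := hslab _ hplus
    have h2 := hslab _ hminus
    have hdiff : ⟪n, (c + v) - O⟫ - ⟪n, (c - v) - O⟫ = 2 * (ρ * ‖n‖) := by
      rw [← inner_sub_right]
      have : (c + v) - O - ((c - v) - O) = (2 * (ρ / ‖n‖)) • n := by
        rw [hv]; module
      rw [this, real_inner_smul_right, real_inner_self_eq_norm_sq]
      field_simp
    have h3 : 2 * (ρ * ‖n‖) ≤ ‖n‖ ^ 2 := by
      rw [← hdiff]
      have := h1.2; have := h2.1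
      linarith
    nlinarith
  -- hence the inradius is at most ‖n‖/2
  have hzero_mem : (0 : ℝ) ∈ {r : ℝ | 0 ≤ r ∧ ∃ c ∈ affineSpan ℝ s,
      closedBall c r ∩ (affineSpan ℝ s : Set E3) ⊆ s} := by
    refine ⟨le_refl _, p 0, ?_, ?_⟩
    · rw [hspan_s]; trivial
    · intro x hx
      have : x = p 0 := by simpa using hx.1
      rw [this]
      exact subset_convexHull ℝ _ ⟨0, rfl⟩
  have hinr : inradius s ≤ ‖n‖ / 2 := csSup_le ⟨0, hzero_mem⟩ hA
  have hinr0 : 0 ≤ inradius s :=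
    le_csSup ⟨‖n‖ / 2, hA⟩ hzero_mem
  -- the circumradius is at least d/2
  have hBne : {r : ℝ | 0 ≤ r ∧ ∃ c, s ⊆ closedBall c r}.Nonempty := by
    have hb : Bornology.IsBounded s := by
      rw [hs, isBounded_convexHull]
      exact (Set.finite_range p).isBounded
    obtain ⟨r, hr0, hr⟩ := hb.subset_closedBall_lt 0 0
    exact ⟨r, hr0.le, 0, hr⟩
  have hcirc : d / 2 ≤ circumradius s := by
    refine le_csInf hBne ?_
    rintro ρ ⟨hρ0, c, hsub⟩
    have h1 : ν' ∈ closedBall c ρ := hsub (hfacehull hν')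
    have h2 : ν'' ∈ closedBall c ρ := hsub (hfacehull hν'')
    have : d ≤ dist ν' c + dist c ν'' := dist_triangle _ _ _
    rw [mem_closedBall] at h1 h2
    rw [dist_comm c ν''] at this
    linarith
  have hcirc0 : 0 < circumradius s := lt_of_lt_of_le (by linarith) hcirc
  -- combine with fatness
  have hfr : f * circumradius s ≤ inradius s := by
    rw [Fat, le_div_iff₀ hcirc0] at hfat
    exact hfat
  have hfd : f * d ≤ ‖n‖ := by
    have h1 : f * (d / 2) ≤ f * circumradius s :=
      mul_le_mul_of_nonneg_left hcirc hf.le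
    have : f * (d / 2) ≤ ‖n‖ / 2 := h1.trans (hfr.trans hinr)
    linarith
  have hdist : dist (p 3) O = ‖n‖ := by rw [hn, dist_eq_norm]
  rw [hdist, lt_div_iff₀ hd0]
  nlinarith [mul_pos hf hd0]
end
end
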